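/- arXiv:1905.09959 — 3 statements merged into one kernel-verified Lean document; each statement's English description precedes it below -/
import Mathlib

section
/- Let $x_S \subset \mathbb{R}$ be a finite multiset of size $n_s$ and $x_T$ one of size $n_t$, and let $\Theta = [\theta_{\min}, \theta_{\max}]$ be an interval. For a finite multiset $x$ define $m(x) = \int_{\Theta} \prod_{y \in x} \frac{1}{\sqrt{2\pi}} e^{-(y-\theta)^2/2} \cdot \frac{1}{|\Theta|} d\theta$ (marginal likelihood with uniform prior on $\Theta$). Suppose there exists $c > 0$ such that all points of $x_S \cup x_T$ lie in $(\theta_{\min} + c, \theta_{\max} - c)$. Then $\frac{m(x_S)\, m(x_T)}{m(x_S \cup x_T)} \geq \frac{c_1 \sqrt{2\pi}}{|\Theta|} \cdot \frac{\sqrt{n_s + n_t}}{\sqrt{n_s n_t}}$ where $c_1 = (\mathrm{erf}(c/\sqrt{2}))^2$. -/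
/-- The Gauss error function. -/
noncomputable def erf (z : ℝ) : ℝ := 2 / Real.sqrt Real.pi * ∫ t in (0 : ℝ)..z, Real.exp (-t ^ 2)

/-- Marginal likelihood of the observations `x` under unit-variance Gaussian likelihood
with a uniform prior on `[θmin, θmax]` for the common mean `θ`. -/
noncomputable def unifMarginal (θmin θmax : ℝ) {m : ℕ} (x : Fin m → ℝ) : ℝ :=
  ∫ θ in θmin..θmax,
    (∏ i, 1 / Real.sqrt (2 * Real.pi) * Real.exp (-(x i - θ) ^ 2 / 2)) * (1 / (θmax - θmin))

open Real MeasureTheory intervalIntegral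

namespace Stmt6Aux

lemma expsq_intable (a b : ℝ) : IntervalIntegrable (fun t : ℝ => Real.exp (-t ^ 2)) volume a b :=
  (Continuous.intervalIntegrable (by continuity) a b)

lemma erf_mono {a b : ℝ} (hab : a ≤ b) : erf a ≤ erf b := by
  unfold erf
  have h1 : (∫ t in (0:ℝ)..a, Real.exp (-t^2)) ≤ ∫ t in (0:ℝ)..b, Real.exp (-t^2) := by
    rw [← intervalIntegral.integral_add_adjacent_intervals (expsq_intable 0 a) (expsq_intable a b)]
    have h2 : 0 ≤ ∫ t in a..b, Real.exp (-t^2) :=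
      intervalIntegral.integral_nonneg hab (fun _ _ => (Real.exp_pos _).le)
    linarith
  have h3 : (0:ℝ) ≤ 2 / Real.sqrt Real.pi := by positivity
  exact mul_le_mul_of_nonneg_left h1 h3

lemma erf_pos {a : ℝ} (ha : 0 < a) : 0 < erf a := by
  unfold erf
  have h1 : 0 < ∫ t in (0:ℝ)..a, Real.exp (-t^2) :=
    intervalIntegral.intervalIntegral_pos_of_pos_on (expsq_intable 0 a)
      (fun x _ => Real.exp_pos _) ha
  positivity

lemma integral_expsq (z : ℝ) :
    (∫ t in (0:ℝ)..z, Real.exp (-t ^ 2)) = Real.sqrt Real.pi / 2 * erf z := by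
  unfold erf
  have : Real.sqrt Real.pi ≠ 0 := by positivity
  field_simp

/-- Gaussian interval integral. -/
noncomputable def gint (n : ℕ) (μ a b : ℝ) : ℝ :=
  ∫ θ in a..b, Real.exp (-((n:ℝ) * (θ - μ) ^ 2) / 2)

lemma gint_le {n : ℕ} (hn : 1 ≤ n) (μ a b : ℝ) (hab : a ≤ b) :
    gint n μ a b ≤ Real.sqrt (2 * Real.pi) / Real.sqrt n := by
  have hn0 : (0:ℝ) < n := by exact_mod_cast hn
  have hb2 : (0:ℝ) < (n:ℝ)/2 := by positivity
  have hi : Integrable (fun θ : ℝ => Real.exp (-((n:ℝ)/2) * (θ - μ) ^ 2)) :=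
    (integrable_exp_neg_mul_sq hb2).comp_sub_right μ
  have key : ∀ θ : ℝ, Real.exp (-((n:ℝ) * (θ - μ) ^ 2) / 2)
      = Real.exp (-((n:ℝ)/2) * (θ - μ) ^ 2) := by
    intro θ; ring_nf
  have h1 : gint n μ a b ≤ ∫ θ : ℝ, Real.exp (-((n:ℝ)/2) * (θ - μ) ^ 2) := by
    unfold gint
    simp_rw [key]
    rw [intervalIntegral.integral_of_le hab]
    exact setIntegral_le_integral hi (Filter.Eventually.of_forall (fun θ => (Real.exp_pos _).le))
  have h2 : (∫ θ : ℝ, Real.exp (-((n:ℝ)/2) * (θ - μ) ^ 2)) = Real.sqrt (Real.pi / ((n:ℝ)/2)) := by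
    rw [MeasureTheory.integral_sub_right_eq_self (fun θ => Real.exp (-((n:ℝ)/2) * θ ^ 2)) μ]
    exact integral_gaussian _
  have h3 : Real.sqrt (Real.pi / ((n:ℝ)/2)) = Real.sqrt (2 * Real.pi) / Real.sqrt n := by
    rw [show Real.pi / ((n:ℝ)/2) = 2 * Real.pi / n by field_simp]
    exact Real.sqrt_div (by positivity) _
  rw [h2, h3] at h1; exact h1

lemma gint_ge {n : ℕ} (hn : 1 ≤ n) {μ a b c : ℝ} (hc : 0 < c) (h1 : a ≤ μ - c) (h2 : μ + c ≤ b) :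
    Real.sqrt (2 * Real.pi) / Real.sqrt n * erf (c / Real.sqrt 2) ≤ gint n μ a b := by
  have hn0 : (0:ℝ) < n := by exact_mod_cast hn
  set k : ℝ := Real.sqrt ((n:ℝ)/2) with hk
  have hk0 : 0 < k := Real.sqrt_pos.mpr (by positivity)
  have hksq : k ^ 2 = (n:ℝ)/2 := Real.sq_sqrt (by positivity)
  have hcont : Continuous (fun θ : ℝ => Real.exp (-((n:ℝ) * (θ - μ) ^ 2) / 2)) := by continuity
  have step1 : (∫ θ in (μ - c)..(μ + c), Real.exp (-((n:ℝ) * (θ - μ) ^ 2) / 2)) ≤ gint n μ a b := by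
    apply intervalIntegral.integral_mono_interval h1 (by linarith) h2
    · exact Filter.Eventually.of_forall (fun θ => (Real.exp_pos _).le)
    · exact hcont.intervalIntegrable a b
  have step2 : (∫ θ in (μ - c)..(μ + c), Real.exp (-((n:ℝ) * (θ - μ) ^ 2) / 2))
      = ∫ u in (-c)..c, Real.exp (-((n:ℝ) * u ^ 2) / 2) := by
    have := intervalIntegral.integral_comp_sub_right
      (fun u : ℝ => Real.exp (-((n:ℝ) * u ^ 2) / 2)) μ (a := μ - c) (b := μ + c)
    simpa using this
  have key : ∀ u : ℝ, Real.exp (-((n:ℝ) * u ^ 2) / 2) = Real.exp (-(k * u) ^ 2) := by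
    intro u
    congr 1
    have : (k * u) ^ 2 = k ^ 2 * u ^ 2 := by ring
    rw [this, hksq]; ring
  have step3 : (∫ u in (-c)..c, Real.exp (-((n:ℝ) * u ^ 2) / 2))
      = k⁻¹ * ∫ t in (k * (-c))..(k * c), Real.exp (-t ^ 2) := by
    simp_rw [key]
    rw [intervalIntegral.integral_comp_mul_left (fun t : ℝ => Real.exp (-t ^ 2)) (ne_of_gt hk0)]
    simp [smul_eq_mul]
  have step4 : (∫ t in (k * (-c))..(k * c), Real.exp (-t ^ 2))
      = 2 * ∫ t in (0:ℝ)..(k * c), Real.exp (-t ^ 2) := by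
    rw [show k * (-c) = -(k * c) by ring]
    rw [← intervalIntegral.integral_add_adjacent_intervals
      (expsq_intable (-(k*c)) 0) (expsq_intable 0 (k*c))]
    have : (∫ t in (-(k*c))..(0:ℝ), Real.exp (-t ^ 2)) = ∫ t in (0:ℝ)..(k*c), Real.exp (-t ^ 2) := by
      have := intervalIntegral.integral_comp_neg (fun t : ℝ => Real.exp (-t ^ 2))
        (a := 0) (b := k * c)
      simp only [neg_zero] at this
      rw [← this]
      congr 1; funext t; congr 1; ring
    rw [this]; ring
  rw [step2, step3, step4, integral_expsq] at step1
  have herf : erf (c / Real.sqrt 2) ≤ erf (k * c) := by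
    apply erf_mono
    have hk1 : 1 / Real.sqrt 2 ≤ k := by
      rw [hk]
      rw [show (1:ℝ) / Real.sqrt 2 = Real.sqrt (1/2) by
        rw [Real.sqrt_div' 1 (by norm_num)]; simp]
      apply Real.sqrt_le_sqrt
      have : (1:ℝ) ≤ n := by exact_mod_cast hn
      linarith
    calc c / Real.sqrt 2 = (1 / Real.sqrt 2) * c := by ring
    _ ≤ k * c := by nlinarith
  have hfac : k⁻¹ * (2 * (Real.sqrt Real.pi / 2 * erf (k * c)))
      = Real.sqrt (2 * Real.pi) / Real.sqrt n * erf (k * c) := by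
    have hsn : Real.sqrt (2 * Real.pi) = Real.sqrt 2 * Real.sqrt Real.pi :=
      Real.sqrt_mul (by norm_num) _
    have hkk : k = Real.sqrt n / Real.sqrt 2 := by
      rw [hk, Real.sqrt_div (by positivity)]
    rw [hkk, hsn]
    have h2 : Real.sqrt 2 ≠ 0 := by positivity
    have hn' : Real.sqrt (n:ℝ) ≠ 0 := by positivity
    field_simp
  rw [hfac] at step1
  have hE : 0 ≤ Real.sqrt (2 * Real.pi) / Real.sqrt n := by positivity
  calc Real.sqrt (2 * Real.pi) / Real.sqrt n * erf (c / Real.sqrt 2)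
      ≤ Real.sqrt (2 * Real.pi) / Real.sqrt n * erf (k * c) := mul_le_mul_of_nonneg_left herf hE
    _ ≤ gint n μ a b := step1

lemma marg_eq (θmin θmax : ℝ) {m : ℕ} (hm : 1 ≤ m) (x : Fin m → ℝ) :
    unifMarginal θmin θmax x =
      (Real.sqrt (2 * Real.pi))⁻¹ ^ m
        * Real.exp (-((∑ i, (x i) ^ 2) - (∑ i, x i) ^ 2 / m) / 2)
        * gint m ((∑ i, x i) / m) θmin θmax * (1 / (θmax - θmin)) := by
  have hm0 : (0:ℝ) < m := by exact_mod_cast hm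
  have key : ∀ θ : ℝ, (∏ i, 1 / Real.sqrt (2 * Real.pi) * Real.exp (-(x i - θ) ^ 2 / 2))
      = (Real.sqrt (2 * Real.pi))⁻¹ ^ m
        * (Real.exp (-((∑ i, (x i) ^ 2) - (∑ i, x i) ^ 2 / m) / 2)
          * Real.exp (-((m:ℝ) * (θ - (∑ i, x i) / m) ^ 2) / 2)) := by
    intro θ
    rw [Finset.prod_mul_distrib, Finset.prod_const, Finset.card_univ, Fintype.card_fin,
      ← Real.exp_sum, ← Real.exp_add]
    congr 1
    · simp [one_div]
    · have expand : ∑ i, (-(x i - θ) ^ 2 / 2)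
          = -(∑ i, (x i) ^ 2) / 2 + θ * (∑ i, x i) - m * θ ^ 2 / 2 := by
        have h : ∀ i : Fin m, (-(x i - θ) ^ 2 / 2) = -((x i) ^ 2) / 2 + θ * x i - θ ^ 2 / 2 := by
          intro i; ring
        rw [Finset.sum_congr rfl (fun i _ => h i)]
        rw [Finset.sum_sub_distrib, Finset.sum_add_distrib, ← Finset.sum_div, ← Finset.mul_sum,
          Finset.sum_const, Finset.card_univ, Fintype.card_fin, nsmul_eq_mul,
          ← Finset.sum_neg_distrib]
        ring
      rw [expand]
      congr 1
      field_simp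
      ring
  unfold unifMarginal gint
  simp_rw [key]
  rw [intervalIntegral.integral_mul_const, intervalIntegral.integral_const_mul,
    intervalIntegral.integral_const_mul]
  ring

lemma avg_bounds {n : ℕ} (hn : 1 ≤ n) {lo hi : ℝ} {x : Fin n → ℝ}
    (h : ∀ i, lo < x i ∧ x i < hi) :
    lo ≤ (∑ i, x i) / n ∧ (∑ i, x i) / n ≤ hi := by
  have hn0 : (0:ℝ) < n := by exact_mod_cast hn
  have h1 : (n:ℝ) * lo ≤ ∑ i, x i := by
    calc (n:ℝ) * lo = ∑ _i : Fin n, lo := by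
          simp [Finset.sum_const, nsmul_eq_mul]
      _ ≤ ∑ i, x i := Finset.sum_le_sum (fun i _ => (h i).1.le)
  have h2 : (∑ i, x i) ≤ (n:ℝ) * hi := by
    calc (∑ i, x i) ≤ ∑ _i : Fin n, hi := Finset.sum_le_sum (fun i _ => (h i).2.le)
      _ = (n:ℝ) * hi := by simp [Finset.sum_const, nsmul_eq_mul]
  constructor
  · rw [le_div_iff₀ hn0]; nlinarith
  · rw [div_le_iff₀ hn0]; nlinarith

lemma cauchy {p q : ℝ} (hp : 0 < p) (hq : 0 < q) (u v : ℝ) :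
    (u + v) ^ 2 / (p + q) ≤ u ^ 2 / p + v ^ 2 / q := by
  rw [div_add_div _ _ (ne_of_gt hp) (ne_of_gt hq), div_le_div_iff₀ (by positivity) (by positivity)]
  nlinarith [sq_nonneg (q * u - p * v), mul_pos hp hq]

end Stmt6Aux

open Stmt6Aux

theorem stmt_6 (θmin θmax c : ℝ) (hc : 0 < c) (ns nt : ℕ) (hns : 1 ≤ ns) (hnt : 1 ≤ nt)
    (xS : Fin ns → ℝ) (xT : Fin nt → ℝ)
    (hxS : ∀ i, θmin + c < xS i ∧ xS i < θmax - c)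
    (hxT : ∀ i, θmin + c < xT i ∧ xT i < θmax - c) :
    (erf (c / Real.sqrt 2)) ^ 2 * Real.sqrt (2 * Real.pi) / (θmax - θmin) *
        (Real.sqrt ((ns : ℝ) + nt) / Real.sqrt ((ns : ℝ) * nt)) ≤
      unifMarginal θmin θmax xS * unifMarginal θmin θmax xT /
        unifMarginal θmin θmax (Fin.append xS xT) := by
  have hnu : 1 ≤ ns + nt := le_trans hns (Nat.le_add_right _ _)
  have hns0 : (0:ℝ) < ns := by exact_mod_cast hns
  have hnt0 : (0:ℝ) < nt := by exact_mod_cast hnt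
  have hL : 0 < θmax - θmin := by
    obtain ⟨h1, h2⟩ := hxS ⟨0, hns⟩
    linarith
  have hab : θmin ≤ θmax := by linarith
  have hxU : ∀ i, θmin + c < Fin.append xS xT i ∧ Fin.append xS xT i < θmax - c := by
    intro i
    refine Fin.addCases (fun j => ?_) (fun j => ?_) i
    · simpa using hxS j
    · simpa using hxT j
  have haU : (∑ i, Fin.append xS xT i) = (∑ i, xS i) + ∑ i, xT i := by
    simp [Fin.sum_univ_add]
  have hbU : (∑ i, (Fin.append xS xT i) ^ 2) = (∑ i, (xS i) ^ 2) + ∑ i, (xT i) ^ 2 := by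
    simp [Fin.sum_univ_add]
  have hcast : ((ns + nt : ℕ):ℝ) = (ns:ℝ) + nt := by push_cast; ring
  obtain ⟨hmS1, hmS2⟩ := avg_bounds hns hxS
  obtain ⟨hmT1, hmT2⟩ := avg_bounds hnt hxT
  obtain ⟨hmU1, hmU2⟩ := avg_bounds hnu hxU
  rw [haU, hcast] at hmU1 hmU2
  -- rewrite the marginals
  rw [marg_eq θmin θmax hns xS, marg_eq θmin θmax hnt xT, marg_eq θmin θmax hnu (Fin.append xS xT)]
  rw [haU, hbU, hcast]
  -- abbreviations
  set E : ℝ := erf (c / Real.sqrt 2) with hE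
  have hE0 : 0 < E := erf_pos (by positivity)
  set aS : ℝ := ∑ i, xS i
  set aT : ℝ := ∑ i, xT i
  set bS : ℝ := ∑ i, (xS i) ^ 2
  set bT : ℝ := ∑ i, (xT i) ^ 2
  set L : ℝ := θmax - θmin
  set C : ℝ := (Real.sqrt (2 * Real.pi))⁻¹ with hC
  have hC0 : 0 < C := by rw [hC]; positivity
  set IS : ℝ := gint ns (aS / ns) θmin θmax
  set IT : ℝ := gint nt (aT / nt) θmin θmax
  set IU : ℝ := gint (ns + nt) ((aS + aT) / ((ns:ℝ) + nt)) θmin θmax with hIU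
  have hIS : Real.sqrt (2 * Real.pi) / Real.sqrt ns * E ≤ IS :=
    gint_ge hns hc (by linarith) (by linarith)
  have hIT : Real.sqrt (2 * Real.pi) / Real.sqrt nt * E ≤ IT :=
    gint_ge hnt hc (by linarith) (by linarith)
  have hIU_le : IU ≤ Real.sqrt (2 * Real.pi) / Real.sqrt ((ns:ℝ) + nt) := by
    have h := gint_le hnu ((aS + aT) / ((ns:ℝ) + nt)) θmin θmax hab
    rw [hcast] at h
    exact h
  have hIU_ge : Real.sqrt (2 * Real.pi) / Real.sqrt ((ns + nt : ℕ):ℝ) * E ≤ IU :=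
    gint_ge (μ := (aS + aT) / ((ns:ℝ) + nt)) hnu hc (by linarith) (by linarith)
  have hIU_pos : 0 < IU := by
    refine lt_of_lt_of_le ?_ hIU_ge
    have : (0:ℝ) < ((ns + nt : ℕ):ℝ) := by exact_mod_cast hnu
    positivity
  -- the sum-of-squares inequality
  have hq : (bS - aS ^ 2 / ns) + (bT - aT ^ 2 / nt)
      ≤ (bS + bT) - (aS + aT) ^ 2 / ((ns:ℝ) + nt) := by
    have := cauchy hns0 hnt0 aS aT
    linarith
  have hexp : Real.exp (-((bS + bT) - (aS + aT) ^ 2 / ((ns:ℝ) + nt)) / 2)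
      ≤ Real.exp (-(bS - aS ^ 2 / ns) / 2) * Real.exp (-(bT - aT ^ 2 / nt) / 2) := by
    rw [← Real.exp_add]
    apply Real.exp_le_exp.mpr
    linarith
  -- denominator positivity
  have hMU : 0 < C ^ (ns + nt)
      * Real.exp (-((bS + bT) - (aS + aT) ^ 2 / ((ns:ℝ) + nt)) / 2) * IU * (1 / L) := by
    have h1L : 0 < (1:ℝ)/L := by positivity
    exact mul_pos (mul_pos (mul_pos (pow_pos hC0 _) (Real.exp_pos _)) hIU_pos) h1L
  rw [le_div_iff₀ hMU]
  have hpre : (0:ℝ) ≤ E ^ 2 * Real.sqrt (2 * Real.pi)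
      * (Real.sqrt ((ns:ℝ) + nt) / Real.sqrt ((ns:ℝ) * nt)) * C ^ (ns + nt) * (1/L) * (1/L) := by
    positivity
  calc E ^ 2 * Real.sqrt (2 * Real.pi) / L * (Real.sqrt ((ns:ℝ) + nt) / Real.sqrt ((ns:ℝ) * nt))
        * (C ^ (ns + nt) * Real.exp (-((bS + bT) - (aS + aT) ^ 2 / ((ns:ℝ) + nt)) / 2) * IU * (1/L))
      = (E ^ 2 * Real.sqrt (2 * Real.pi) * (Real.sqrt ((ns:ℝ) + nt) / Real.sqrt ((ns:ℝ) * nt))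
          * C ^ (ns + nt) * (1/L) * (1/L))
        * (Real.exp (-((bS + bT) - (aS + aT) ^ 2 / ((ns:ℝ) + nt)) / 2) * IU) := by ring
    _ ≤ (E ^ 2 * Real.sqrt (2 * Real.pi) * (Real.sqrt ((ns:ℝ) + nt) / Real.sqrt ((ns:ℝ) * nt))
          * C ^ (ns + nt) * (1/L) * (1/L))
        * ((Real.exp (-(bS - aS ^ 2 / ns) / 2) * Real.exp (-(bT - aT ^ 2 / nt) / 2))
          * (Real.sqrt (2 * Real.pi) / Real.sqrt ((ns:ℝ) + nt))) := by
        apply mul_le_mul_of_nonneg_left _ hpre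
        exact mul_le_mul hexp hIU_le hIU_pos.le (by positivity)
    _ = (C ^ ns * Real.exp (-(bS - aS ^ 2 / ns) / 2)
          * (Real.sqrt (2 * Real.pi) / Real.sqrt ns * E) * (1/L))
        * (C ^ nt * Real.exp (-(bT - aT ^ 2 / nt) / 2)
          * (Real.sqrt (2 * Real.pi) / Real.sqrt nt * E) * (1/L)) := by
        rw [pow_add, Real.sqrt_mul (by positivity : (0:ℝ) ≤ (ns:ℝ))]
        have h1 : Real.sqrt ((ns:ℝ) + nt) ≠ 0 := by positivity
        have h2 : Real.sqrt (ns:ℝ) ≠ 0 := by positivity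
        have h3 : Real.sqrt (nt:ℝ) ≠ 0 := by positivity
        have h4 : L ≠ 0 := ne_of_gt hL
        field_simp
    _ ≤ (C ^ ns * Real.exp (-(bS - aS ^ 2 / ns) / 2) * IS * (1/L))
        * (C ^ nt * Real.exp (-(bT - aT ^ 2 / nt) / 2) * IT * (1/L)) := by
        apply mul_le_mul
        · apply mul_le_mul_of_nonneg_right _ (by positivity)
          exact mul_le_mul_of_nonneg_left hIS (by positivity)
        · apply mul_le_mul_of_nonneg_right _ (by positivity)
          exact mul_le_mul_of_nonneg_left hIT (by positivity)
        · positivity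
        · have hISpos : 0 < IS := lt_of_lt_of_le (by positivity) hIS
          positivity
end

section
/- For $\alpha > 0$ and $0 \leq \xi < 1$, the Pitman-Yor partition probabilities $P(A) = \frac{\prod_{k=0}^{s-1}(\alpha + \xi k)}{\alpha^{(n)}} \prod_{i=1}^s |(|A_i| - 1) \ominus \xi|!$ sum to $1$ over all partitions $A$ of $[n]$, where $|c \ominus \xi|! = (1-\xi)(2-\xi)\cdots(c-\xi)$ with $|0 \ominus \xi|! = 1$ and $\alpha^{(n)} = \alpha(\alpha+1)\cdots(\alpha+n-1)$. -/
/-!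
Seat customer `n + 1` of the Chinese restaurant: given a partition `B` of `[n]` with `s` blocks,
either open a new block or join a block `c` of `B`. Every partition of `[n + 1]` arises exactly
once, and the unnormalised weight `∏_{k<s} (α + ξ k) ∏_i |(|B_i| - 1) ⊖ ξ|!` gets multiplied by
`α + ξ s`, resp. `|c| - ξ`. These factors sum to `α + n` because the block sizes sum to `n`, so the
total weight of the partitions of `[n]` is `α^{(n)}`.
-/

open scoped Classical

/-- `P` is a partition of `Fin n`: no empty block, and every element lies in a unique block. -/
def IsPartition {n : ℕ} (P : Finset (Finset (Fin n))) : Prop :=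
  (∅ ∉ P) ∧ ∀ i : Fin n, ∃! b, b ∈ P ∧ i ∈ b

/-- All set partitions of `[n]`. -/
noncomputable def allPartitions (n : ℕ) : Finset (Finset (Finset (Fin n))) :=
  Finset.univ.filter (fun P => IsPartition P)

/-- The rising factorial `α^{(n)} = α(α+1)⋯(α+n-1)`. -/
noncomputable def ascF (α : ℝ) (n : ℕ) : ℝ := ∏ i ∈ Finset.range n, (α + i)

/-- The discounted factorial `|c ⊖ ξ|! = (1-ξ)(2-ξ)⋯(c-ξ)`, with `|0 ⊖ ξ|! = 1`. -/
noncomputable def dfact (ξ : ℝ) (c : ℕ) : ℝ := ∏ i ∈ Finset.range c, ((i : ℝ) + 1 - ξ)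

open Finset

namespace IsPartition

variable {n : ℕ} {P : Finset (Finset (Fin n))}

lemma ne_empty (hP : IsPartition P) {b : Finset (Fin n)} (hb : b ∈ P) : b ≠ ∅ :=
  fun h => hP.1 (h ▸ hb)

lemma eq_of_mem_of_mem (hP : IsPartition P) {a b : Finset (Fin n)} (ha : a ∈ P) (hb : b ∈ P)
    {x : Fin n} (hxa : x ∈ a) (hxb : x ∈ b) : a = b :=
  (hP.2 x).unique ⟨ha, hxa⟩ ⟨hb, hxb⟩

lemma sum_card (hP : IsPartition P) : ∑ b ∈ P, b.card = n := by
  have hdisj : (P : Set (Finset (Fin n))).PairwiseDisjoint id := fun a ha b hb hab =>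
    disjoint_left.2 fun x hxa hxb => hab (hP.eq_of_mem_of_mem ha hb hxa hxb)
  have hcover : P.biUnion id = univ := eq_univ_of_forall fun x => by
    obtain ⟨b, ⟨hb, hxb⟩, -⟩ := hP.2 x
    exact mem_biUnion.2 ⟨b, hb, hxb⟩
  simpa [hcover] using (card_biUnion hdisj).symm

end IsPartition

namespace PitmanYor

variable {n : ℕ}

lemma mem_allPartitions {P : Finset (Finset (Fin n))} : P ∈ allPartitions n ↔ IsPartition P := by
  simp [allPartitions]

lemma allPartitions_zero : allPartitions 0 = {∅} := by
  ext A
  rw [mem_allPartitions, mem_singleton]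
  refine ⟨fun hA => eq_empty_of_forall_notMem fun b hb => hA.ne_empty hb b.eq_empty_of_isEmpty,
    ?_⟩
  rintro rfl
  exact ⟨notMem_empty _, fun i => i.elim0⟩

def liftBlock (b : Finset (Fin n)) : Finset (Fin (n + 1)) := b.map Fin.castSuccEmb

def restrictBlock (a : Finset (Fin (n + 1))) : Finset (Fin n) := univ.filter (·.castSucc ∈ a)

@[simp] lemma castSucc_mem_liftBlock {b : Finset (Fin n)} {i : Fin n} :
    i.castSucc ∈ liftBlock b ↔ i ∈ b :=
  mem_map' Fin.castSuccEmb

@[simp] lemma mem_restrictBlock {a : Finset (Fin (n + 1))} {i : Fin n} :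
    i ∈ restrictBlock a ↔ i.castSucc ∈ a := by
  simp [restrictBlock]

@[simp] lemma last_notMem_liftBlock (b : Finset (Fin n)) : Fin.last n ∉ liftBlock b := by
  simp [liftBlock, (Fin.castSucc_lt_last _).ne]

lemma liftBlock_injective : Function.Injective (liftBlock (n := n)) :=
  map_injective Fin.castSuccEmb

@[simp] lemma card_liftBlock (b : Finset (Fin n)) : (liftBlock b).card = b.card :=
  card_map _

@[simp] lemma liftBlock_eq_empty {b : Finset (Fin n)} : liftBlock b = ∅ ↔ b = ∅ :=
  map_eq_empty

@[simp] lemma restrictBlock_liftBlock (b : Finset (Fin n)) : restrictBlock (liftBlock b) = b := by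
  ext i; simp

@[simp] lemma restrictBlock_insert_last (a : Finset (Fin (n + 1))) :
    restrictBlock (insert (Fin.last n) a) = restrictBlock a := by
  ext i; simp [(Fin.castSucc_lt_last i).ne]

lemma liftBlock_restrictBlock (a : Finset (Fin (n + 1))) :
    liftBlock (restrictBlock a) = a.erase (Fin.last n) := by
  ext j
  induction j using Fin.lastCases with
  | last => simp
  | cast i => simp [(Fin.castSucc_lt_last i).ne]

lemma insert_last_liftBlock_notMem_image (B : Finset (Finset (Fin n))) (o : Finset (Fin n)) :
    insert (Fin.last n) (liftBlock o) ∉ B.image liftBlock := by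
  simp only [mem_image, not_exists, not_and]
  exact fun b _ h => last_notMem_liftBlock b (h ▸ mem_insert_self _ _)

-- `o = ∅` encodes opening a new block; otherwise `Fin.last n` joins the block `o ∈ B`.
def insertLast (B : Finset (Finset (Fin n))) (o : Finset (Fin n)) :
    Finset (Finset (Fin (n + 1))) :=
  insert (insert (Fin.last n) (liftBlock o)) ((B.erase o).image liftBlock)

def eraseLast (A : Finset (Finset (Fin (n + 1)))) : Finset (Finset (Fin n)) :=
  (A.image restrictBlock).erase ∅

def restrictLastBlock (A : Finset (Finset (Fin (n + 1)))) : Finset (Fin n) :=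
  univ.filter fun i => ∃ a ∈ A, Fin.last n ∈ a ∧ i.castSucc ∈ a

section insertLast

variable {B : Finset (Finset (Fin n))} {o : Finset (Fin n)}

lemma isPartition_insertLast (hB : IsPartition B) (ho : o ∈ insert ∅ B) :
    IsPartition (insertLast B o) := by
  refine ⟨?_, fun j => ?_⟩
  · simp only [insertLast, mem_insert, mem_image, mem_erase, not_or, not_exists, not_and]
    exact ⟨(insert_ne_empty _ _).symm,
      fun b hb h => hB.ne_empty hb.2 (liftBlock_eq_empty.1 h)⟩
  induction j using Fin.lastCases with
  | last =>
    refine ⟨_, ⟨mem_insert_self _ _, mem_insert_self _ _⟩, fun a ⟨ha, hla⟩ => ?_⟩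
    obtain rfl | ⟨b, -, rfl⟩ := mem_insert.1 ha |>.imp_right mem_image.1
    · rfl
    · exact absurd hla (last_notMem_liftBlock b)
  | cast i =>
    obtain ⟨b, ⟨hb, hib⟩, hbu⟩ := hB.2 i
    have hblock : ∀ a ∈ insertLast B o, i.castSucc ∈ a →
        a = if b = o then insert (Fin.last n) (liftBlock o) else liftBlock b := by
      intro a ha hia
      obtain rfl | ⟨b', hb', rfl⟩ := mem_insert.1 ha |>.imp_right mem_image.1
      · have hio : i ∈ o := by simpa [(Fin.castSucc_lt_last i).ne] using hia
        have hoB : o ∈ B := (mem_insert.1 ho).resolve_left (ne_empty_of_mem hio)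
        rw [if_pos (hbu o ⟨hoB, hio⟩).symm]
      · obtain ⟨hb'o, hb'B⟩ := mem_erase.1 hb'
        obtain rfl := hbu b' ⟨hb'B, castSucc_mem_liftBlock.1 hia⟩
        rw [if_neg hb'o]
    refine ⟨_, ⟨?_, ?_⟩, fun a ha => hblock a ha.1 ha.2⟩ <;> split_ifs with hbo
    · exact mem_insert_self _ _
    · exact mem_insert_of_mem (mem_image_of_mem _ (mem_erase.2 ⟨hbo, hb⟩))
    · exact mem_insert_of_mem (hbo ▸ castSucc_mem_liftBlock.2 hib)
    · exact castSucc_mem_liftBlock.2 hib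

lemma eraseLast_insertLast (hB : IsPartition B) (ho : o ∈ insert ∅ B) :
    eraseLast (insertLast B o) = B := by
  have himage : (insertLast B o).image restrictBlock = insert o (B.erase o) := by
    simp only [insertLast, image_insert, image_image, restrictBlock_insert_last,
      restrictBlock_liftBlock, Function.comp_def, image_id']
  rw [eraseLast, himage]
  obtain rfl | ho := mem_insert.1 ho
  · rw [erase_insert_eq_erase, erase_idem, erase_eq_of_notMem hB.1]
  · rw [insert_erase ho, erase_eq_of_notMem hB.1]

lemma restrictLastBlock_insertLast : restrictLastBlock (insertLast B o) = o := by
  ext i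
  simp only [restrictLastBlock, mem_filter, mem_univ, true_and]
  constructor
  · rintro ⟨a, ha, hla, hia⟩
    obtain rfl | ⟨b, -, rfl⟩ := mem_insert.1 ha |>.imp_right mem_image.1
    · simpa [(Fin.castSucc_lt_last i).ne] using hia
    · exact absurd hla (last_notMem_liftBlock b)
  · exact fun hio => ⟨_, mem_insert_self _ _, mem_insert_self _ _,
      mem_insert_of_mem (castSucc_mem_liftBlock.2 hio)⟩

end insertLast

section eraseLast

variable {A : Finset (Finset (Fin (n + 1)))}

lemma restrictBlock_injOn (hA : IsPartition A) : Set.InjOn (restrictBlock (n := n)) A := by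
  have hsingleton : ∀ a ∈ A, restrictBlock a = ∅ → a = {Fin.last n} := fun a ha h => by
    have hsub := liftBlock_restrictBlock a
    rw [h, liftBlock_eq_empty.2 rfl, eq_comm, erase_eq_empty_iff] at hsub
    exact hsub.resolve_left (hA.ne_empty ha)
  intro a ha a' ha' h
  obtain ⟨i, hi⟩ | hempty := (restrictBlock a).eq_empty_or_nonempty.symm
  · exact hA.eq_of_mem_of_mem ha ha' (mem_restrictBlock.1 hi) (mem_restrictBlock.1 (h ▸ hi))
  · rw [hsingleton a ha hempty, hsingleton a' ha' (h ▸ hempty)]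

lemma isPartition_eraseLast (hA : IsPartition A) : IsPartition (eraseLast A) := by
  refine ⟨notMem_erase _ _, fun i => ?_⟩
  obtain ⟨a, ⟨ha, hia⟩, hu⟩ := hA.2 i.castSucc
  have hi : i ∈ restrictBlock a := mem_restrictBlock.2 hia
  refine ⟨restrictBlock a, ⟨mem_erase.2 ⟨ne_empty_of_mem hi, mem_image_of_mem _ ha⟩, hi⟩, ?_⟩
  rintro b ⟨hb, hib⟩
  obtain ⟨a', ha', rfl⟩ := mem_image.1 (mem_of_mem_erase hb)
  rw [hu a' ⟨ha', mem_restrictBlock.1 hib⟩]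

lemma restrictLastBlock_eq_restrictBlock (hA : IsPartition A) {a₀ : Finset (Fin (n + 1))}
    (ha₀ : a₀ ∈ A) (hla₀ : Fin.last n ∈ a₀) : restrictLastBlock A = restrictBlock a₀ := by
  ext i
  simp only [restrictLastBlock, mem_filter, mem_univ, true_and, mem_restrictBlock]
  refine ⟨fun ⟨a, ha, hla, hia⟩ => ?_, fun hi => ⟨a₀, ha₀, hla₀, hi⟩⟩
  rwa [hA.eq_of_mem_of_mem ha ha₀ hla hla₀] at hia

lemma restrictLastBlock_mem (hA : IsPartition A) :
    restrictLastBlock A ∈ insert ∅ (eraseLast A) := by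
  obtain ⟨a₀, ⟨ha₀, hla₀⟩, -⟩ := hA.2 (Fin.last n)
  rw [restrictLastBlock_eq_restrictBlock hA ha₀ hla₀, mem_insert, eraseLast, mem_erase]
  by_cases h : restrictBlock a₀ = ∅
  · exact .inl h
  · exact .inr ⟨h, mem_image_of_mem _ ha₀⟩

lemma insertLast_eraseLast_restrictLastBlock (hA : IsPartition A) :
    insertLast (eraseLast A) (restrictLastBlock A) = A := by
  obtain ⟨a₀, ⟨ha₀, hla₀⟩, hu⟩ := hA.2 (Fin.last n)
  have hlift : ∀ a ∈ A.erase a₀, liftBlock (restrictBlock a) = a := fun a ha => by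
    obtain ⟨hne, ha⟩ := mem_erase.1 ha
    rw [liftBlock_restrictBlock, erase_eq_of_notMem fun hla => hne (hu a ⟨ha, hla⟩)]
  have hrest : (eraseLast A).erase (restrictBlock a₀) = (A.erase a₀).image restrictBlock := by
    ext x
    simp only [eraseLast, mem_erase, mem_image]
    constructor
    · rintro ⟨hx₀, -, a, ha, rfl⟩
      exact ⟨a, ⟨fun h => hx₀ (h ▸ rfl), ha⟩, rfl⟩
    · rintro ⟨a, ⟨hne, ha⟩, rfl⟩
      refine ⟨fun h => hne (restrictBlock_injOn hA ha ha₀ h), fun h => hA.ne_empty ha ?_,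
        a, ha, rfl⟩
      rw [← hlift a (mem_erase.2 ⟨hne, ha⟩), h]
      rfl
  rw [restrictLastBlock_eq_restrictBlock hA ha₀ hla₀, insertLast, hrest, image_image,
    image_congr (f := liftBlock ∘ restrictBlock) (g := id) hlift, image_id,
    liftBlock_restrictBlock, insert_erase hla₀, insert_erase ha₀]

end eraseLast

lemma sum_allPartitions_succ {M : Type*} [AddCommMonoid M]
    (f : Finset (Finset (Fin (n + 1))) → M) :
    ∑ A ∈ allPartitions (n + 1), f A =
      ∑ B ∈ allPartitions n, ∑ o ∈ insert ∅ B, f (insertLast B o) := by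
  rw [← sum_sigma (allPartitions n) (fun B => insert ∅ B) fun p => f (insertLast p.1 p.2)]
  symm
  refine sum_nbij' (fun p => insertLast p.1 p.2) (fun A => ⟨eraseLast A, restrictLastBlock A⟩)
    ?_ ?_ ?_ ?_ fun _ _ => rfl
  · rintro ⟨B, o⟩ hp
    obtain ⟨hB, ho⟩ := mem_sigma.1 hp
    exact mem_allPartitions.2 (isPartition_insertLast (mem_allPartitions.1 hB) ho)
  · intro A hA
    have hA := mem_allPartitions.1 hA
    exact mem_sigma.2 ⟨mem_allPartitions.2 (isPartition_eraseLast hA), restrictLastBlock_mem hA⟩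
  · rintro ⟨B, o⟩ hp
    obtain ⟨hB, ho⟩ := mem_sigma.1 hp
    exact Sigma.ext (eraseLast_insertLast (mem_allPartitions.1 hB) ho)
      (heq_of_eq restrictLastBlock_insertLast)
  · intro A hA
    exact insertLast_eraseLast_restrictLastBlock (mem_allPartitions.1 hA)

lemma card_insertLast (B : Finset (Finset (Fin n))) (o : Finset (Fin n)) :
    (insertLast B o).card = (B.erase o).card + 1 := by
  rw [insertLast, card_insert_of_notMem (insert_last_liftBlock_notMem_image _ _),
    card_image_of_injective _ liftBlock_injective]

lemma dfact_succ (ξ : ℝ) (c : ℕ) : dfact ξ (c + 1) = dfact ξ c * (c + 1 - ξ) :=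
  prod_range_succ _ _

lemma prod_dfact_insertLast (ξ : ℝ) (B : Finset (Finset (Fin n))) (o : Finset (Fin n)) :
    ∏ a ∈ insertLast B o, dfact ξ (a.card - 1)
      = dfact ξ o.card * ∏ b ∈ B.erase o, dfact ξ (b.card - 1) := by
  rw [insertLast, prod_insert (insert_last_liftBlock_notMem_image _ _),
    prod_image fun _ _ _ _ h => liftBlock_injective h,
    card_insert_of_notMem (last_notMem_liftBlock o)]
  simp only [card_liftBlock, Nat.add_sub_cancel]

noncomputable def weight (α ξ : ℝ) (A : Finset (Finset (Fin n))) : ℝ :=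
  (∏ k ∈ range A.card, (α + ξ * k)) * ∏ a ∈ A, dfact ξ (a.card - 1)

variable {B : Finset (Finset (Fin n))} (α ξ : ℝ)

lemma weight_insertLast_empty (hB : IsPartition B) :
    weight α ξ (insertLast B ∅) = (α + ξ * B.card) * weight α ξ B := by
  rw [weight, weight, card_insertLast, prod_dfact_insertLast, erase_eq_of_notMem hB.1,
    prod_range_succ, card_empty, dfact, range_zero, prod_empty]
  ring

lemma weight_insertLast_of_mem {o : Finset (Fin n)} (hB : IsPartition B) (ho : o ∈ B) :
    weight α ξ (insertLast B o) = ((o.card : ℝ) - ξ) * weight α ξ B := by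
  obtain ⟨c, hc⟩ : ∃ c, o.card = c + 1 :=
    Nat.exists_eq_add_one.2 (card_pos.2 (nonempty_iff_ne_empty.2 (hB.ne_empty ho)))
  rw [weight, weight, card_insertLast, card_erase_add_one ho, prod_dfact_insertLast,
    ← mul_prod_erase B _ ho, hc, dfact_succ, Nat.add_sub_cancel]
  push_cast
  ring

lemma sum_weight_insertLast (hB : IsPartition B) :
    ∑ o ∈ insert ∅ B, weight α ξ (insertLast B o) = (α + n) * weight α ξ B := by
  have hsizes : ∑ b ∈ B, ((b.card : ℝ) - ξ) = n - ξ * B.card := by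
    rw [sum_sub_distrib, ← Nat.cast_sum, hB.sum_card, sum_const, nsmul_eq_mul, mul_comm]
  rw [sum_insert hB.1, weight_insertLast_empty α ξ hB,
    sum_congr rfl fun o ho => weight_insertLast_of_mem α ξ hB ho, ← sum_mul, hsizes]
  ring

theorem sum_weight_allPartitions (n : ℕ) : ∑ A ∈ allPartitions n, weight α ξ A = ascF α n := by
  induction n with
  | zero => simp [allPartitions_zero, weight, ascF]
  | succ n ih =>
    rw [sum_allPartitions_succ, sum_congr rfl fun B hB =>
        sum_weight_insertLast α ξ (mem_allPartitions.1 hB), ← mul_sum, ih, ascF, ascF,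
      prod_range_succ, mul_comm]

end PitmanYor

theorem stmt_10_general (n : ℕ) (α ξ : ℝ) (hα : 0 < α) :
    ∑ A ∈ allPartitions n,
      (∏ k ∈ Finset.range A.card, (α + ξ * k)) / ascF α n *
        ∏ a ∈ A, dfact ξ (a.card - 1) = 1 := by
  have hasc : ascF α n ≠ 0 := (prod_pos fun i _ => by positivity).ne'
  simp_rw [div_mul_eq_mul_div, ← sum_div]
  exact (div_eq_one_iff_eq hasc).2 (PitmanYor.sum_weight_allPartitions α ξ n)

theorem stmt_10 (n : ℕ) (hn : 1 ≤ n) (α ξ : ℝ) (hα : 0 < α) (hξ0 : 0 ≤ ξ) (hξ1 : ξ < 1) :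
    ∑ A ∈ allPartitions n,
      (∏ k ∈ Finset.range A.card, (α + ξ * k)) / ascF α n *
        ∏ a ∈ A, dfact ξ (a.card - 1) = 1 :=
  stmt_10_general n α ξ hα
end

section
/- Let $n \geq s+1$, and for each partition $B \in \rho_s(n)$ with block sizes $b_1,\dots,b_s$, suppose that for every split of a block $B_i$ into two nonempty parts of sizes $j$ and $b_i - j$ the corresponding marginal ratio satisfies $\frac{m(x_{A_i}) m(x_{A_{s+1}})}{m(x_{B_i})} \geq \frac{c_1\sqrt{2\pi}}{|\Theta|}\sqrt{\frac{b_i}{j(b_i-j)}}$. Then $\sum_{A \in \eta_{ext}(B)} \frac{p(A,x)}{p(B,x)} \geq \frac{\alpha c_1 \sqrt{2\pi}}{|\Theta|} \sum_{i=1}^{s} \sum_{j=1}^{b_i - 1}\binom{b_i}{j}\frac{(j-1)!(b_i-j-1)!}{(b_i-1)!}\sqrt{\frac{b_i}{j(b_i-j)}} \cdot \frac{1}{2} = \frac{\alpha c_1\sqrt{2\pi}}{2|\Theta|}\sum_{i=1}^s \sum_{j=1}^{b_i-1}\left(\frac{b_i}{j(b_i-j)}\right)^{3/2} \geq \frac{\alpha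 c_1\sqrt{2\pi}}{|\Theta|} \cdot \#\{i : b_i \geq 2\}$, using the identity $\binom{b_i}{j}\frac{(j-1)!(b_i-j-1)!}{(b_i-1)!} = \frac{b_i}{j(b_i-j)}$. -/
open scoped Classical

/-- The set `ρ_k(n)` of partitions of `[n]` into exactly `k` nonempty blocks. -/
noncomputable def rho (n k : ℕ) : Finset (Finset (Finset (Fin n))) :=
  Finset.univ.filter (fun P => IsPartition P ∧ P.card = k)

/-- `B` arises from `A` by merging exactly two blocks of `A` into one. -/
def MergeOf {n : ℕ} (B A : Finset (Finset (Fin n))) : Prop :=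
  ∃ a₁ ∈ A, ∃ a₂ ∈ A, a₁ ≠ a₂ ∧ B = insert (a₁ ∪ a₂) ((A.erase a₁).erase a₂)

/-- The unnormalized DPMM posterior weight of a partition `A`, given the per-cluster
marginal likelihoods `marg`. -/
noncomputable def dpWeight (α : ℝ) (n : ℕ) (marg : Finset (Fin n) → ℝ)
    (A : Finset (Finset (Fin n))) : ℝ :=
  α ^ A.card / ascF α n * ∏ t ∈ A, ((Nat.factorial (t.card - 1) : ℝ) * marg t)

/-!
Splitting a block `t` of `B` into a nonempty proper subset `a` and `t \ a` yields a refinement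
`A ∈ η_ext(B)` with `p(A)/p(B) = α (|a|-1)! (|t|-|a|-1)! / (|t|-1)! · m(a) m(t \ a) / m(t)`,
which the hypothesis bounds below in terms of `|t|` and `|a|` only. Each refinement comes from
at most the two pairs `(t, a)` and `(t, t \ a)`, whence the factor `1/2`, and grouping the pairs
by `j = |a|` produces `binom(|t|, j)`. Since `binom(b, j) (j-1)! (b-j-1)! / (b-1)! = b / (j (b-j))`
each summand is a `3/2`-power, and for `b ≥ 2` the terms `j = 1` and `j = b - 1` already give `2`.
-/

open Finset

theorem Finset.sum_comp_le_mul_sum_of_card_fiber_le {ι κ R : Type*} [DecidableEq κ]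
    [Semiring R] [PartialOrder R] [IsOrderedRing R] {s : Finset ι} {t : Finset κ}
    {g : ι → κ} {f : κ → R} (m : ℕ) (hg : ∀ i ∈ s, g i ∈ t)
    (hfib : ∀ i ∈ s, #{j ∈ s | g j = g i} ≤ m) (hf : ∀ y ∈ t, 0 ≤ f y) :
    ∑ i ∈ s, f (g i) ≤ m * ∑ y ∈ t, f y := by
  rw [← sum_fiberwise_of_maps_to hg, mul_sum]
  refine sum_le_sum fun y hy => ?_
  rw [sum_congr rfl fun i hi => by rw [(mem_filter.1 hi).2], sum_const, nsmul_eq_mul]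
  refine mul_le_mul_of_nonneg_right (Nat.mono_cast ?_) (hf y hy)
  obtain h | ⟨i, hi⟩ := {j ∈ s | g j = y}.eq_empty_or_nonempty
  · simp [h]
  · obtain ⟨his, rfl⟩ := mem_filter.1 hi
    exact hfib i his

namespace IsPartition

variable {n : ℕ} {B : Finset (Finset (Fin n))}

theorem eq_of_mem_of_mem_s18 (hB : IsPartition B) {b c : Finset (Fin n)} (hb : b ∈ B) (hc : c ∈ B)
    {x : Fin n} (hxb : x ∈ b) (hxc : x ∈ c) : b = c := by
  obtain ⟨u, _, hu⟩ := hB.2 x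
  rw [hu b ⟨hb, hxb⟩, hu c ⟨hc, hxc⟩]

theorem nonempty_of_mem (hB : IsPartition B) {t : Finset (Fin n)} (ht : t ∈ B) : t.Nonempty :=
  nonempty_iff_ne_empty.2 fun h => hB.1 (h ▸ ht)

theorem notMem_of_ssubset (hB : IsPartition B) {t c : Finset (Fin n)} (ht : t ∈ B)
    (hc : c.Nonempty) (hct : c ⊂ t) : c ∉ B := fun hcB =>
  hct.ne (hB.eq_of_mem_of_mem_s18 hcB ht hc.choose_spec (hct.subset hc.choose_spec))

end IsPartition

section Split

variable {n : ℕ} {B : Finset (Finset (Fin n))} {t a : Finset (Fin n)}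

def splitBlock (B : Finset (Finset (Fin n))) (t a : Finset (Fin n)) : Finset (Finset (Fin n)) :=
  insert a (insert (t \ a) (B.erase t))

theorem mem_splitBlock {c : Finset (Fin n)} :
    c ∈ splitBlock B t a ↔ c = a ∨ c = t \ a ∨ (c ≠ t ∧ c ∈ B) := by
  simp only [splitBlock, mem_insert, mem_erase]

theorem ne_sdiff_of_nonempty (ha : a.Nonempty) : a ≠ t \ a := by
  obtain ⟨x, hx⟩ := ha
  exact fun h => (mem_sdiff.1 (h ▸ hx)).2 hx

theorem sdiff_notMem_erase (hB : IsPartition B) (ht : t ∈ B) (ha : a.Nonempty)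
    (hat : a ⊂ t) : t \ a ∉ B.erase t := fun h =>
  hB.notMem_of_ssubset ht (sdiff_nonempty.2 hat.2)
    (sdiff_ssubset hat.subset ha) (mem_of_mem_erase h)

theorem notMem_insert_sdiff_erase (hB : IsPartition B) (ht : t ∈ B) (ha : a.Nonempty)
    (hat : a ⊂ t) : a ∉ insert (t \ a) (B.erase t) := by
  rw [mem_insert, not_or]
  exact ⟨ne_sdiff_of_nonempty ha, fun h => hB.notMem_of_ssubset ht ha hat
    (mem_of_mem_erase h)⟩

theorem card_splitBlock (hB : IsPartition B) (ht : t ∈ B) (ha : a.Nonempty)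
    (hat : a ⊂ t) : #(splitBlock B t a) = #B + 1 := by
  rw [splitBlock, card_insert_of_notMem (notMem_insert_sdiff_erase hB ht ha hat),
    card_insert_of_notMem (sdiff_notMem_erase hB ht ha hat), card_erase_add_one ht]

theorem notMem_splitBlock (ha : a.Nonempty) (hat : a ⊂ t) : t ∉ splitBlock B t a := by
  rw [mem_splitBlock]
  rintro (h | h | ⟨h, -⟩)
  · exact hat.ne h.symm
  · exact (sdiff_ssubset hat.subset ha).ne h.symm
  · exact h rfl

theorem isPartition_splitBlock (hB : IsPartition B) (ht : t ∈ B) (ha : a.Nonempty)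
    (hat : a ⊂ t) : IsPartition (splitBlock B t a) := by
  refine ⟨?_, fun i => ?_⟩
  · simp only [mem_splitBlock, not_or, not_and]
    exact ⟨ha.ne_empty.symm, (sdiff_nonempty.2 hat.2).ne_empty.symm,
      fun _ h => hB.1 h⟩
  by_cases hia : i ∈ a
  · refine ⟨a, ⟨mem_splitBlock.2 (Or.inl rfl), hia⟩, fun c ⟨hc, hic⟩ => ?_⟩
    rcases mem_splitBlock.1 hc with rfl | rfl | ⟨hct, hcB⟩
    · rfl
    · exact absurd hia (mem_sdiff.1 hic).2
    · exact absurd (hB.eq_of_mem_of_mem_s18 hcB ht hic (hat.subset hia)) hct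
  by_cases hit : i ∈ t
  · refine ⟨t \ a, ⟨mem_splitBlock.2 (Or.inr (Or.inl rfl)), mem_sdiff.2 ⟨hit, hia⟩⟩,
      fun c ⟨hc, hic⟩ => ?_⟩
    rcases mem_splitBlock.1 hc with rfl | rfl | ⟨hct, hcB⟩
    · exact absurd hic hia
    · rfl
    · exact absurd (hB.eq_of_mem_of_mem_s18 hcB ht hic hit) hct
  obtain ⟨b, ⟨hb, hib⟩, -⟩ := hB.2 i
  have hbt : b ≠ t := fun h => hit (h ▸ hib)
  refine ⟨b, ⟨mem_splitBlock.2 (Or.inr (Or.inr ⟨hbt, hb⟩)), hib⟩, fun c ⟨hc, hic⟩ => ?_⟩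
  rcases mem_splitBlock.1 hc with rfl | rfl | ⟨-, hcB⟩
  · exact absurd hic hia
  · exact absurd (mem_sdiff.1 hic).1 hit
  · exact hB.eq_of_mem_of_mem_s18 hcB hb hic hib

theorem mergeOf_splitBlock (hB : IsPartition B) (ht : t ∈ B) (ha : a.Nonempty)
    (hat : a ⊂ t) : MergeOf B (splitBlock B t a) := by
  refine ⟨a, mem_splitBlock.2 (Or.inl rfl), t \ a, mem_splitBlock.2 (Or.inr (Or.inl rfl)),
    ne_sdiff_of_nonempty ha, ?_⟩
  rw [union_sdiff_of_subset hat.subset, splitBlock,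
    erase_insert (notMem_insert_sdiff_erase hB ht ha hat),
    erase_insert (sdiff_notMem_erase hB ht ha hat), insert_erase ht]

theorem eq_of_splitBlock_eq (hB : IsPartition B) {t' a' : Finset (Fin n)} (ht' : t' ∈ B)
    (ha' : a'.Nonempty) (hat' : a' ⊂ t') (h : splitBlock B t' a' = splitBlock B t a) :
    t' = t ∧ (a' = a ∨ a' = t \ a) := by
  have htt : t' = t := by
    by_contra hne
    have : t' ∈ splitBlock B t a := mem_splitBlock.2 (Or.inr (Or.inr ⟨hne, ht'⟩))
    exact notMem_splitBlock ha' hat' (h ▸ this)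
  subst htt
  rcases mem_splitBlock.1 (h ▸ mem_splitBlock.2 (Or.inl rfl) : a' ∈ splitBlock B t' a)
    with h' | h' | ⟨-, ha'B⟩
  · exact ⟨rfl, Or.inl h'⟩
  · exact ⟨rfl, Or.inr h'⟩
  · exact absurd ha'B (hB.notMem_of_ssubset ht' ha' hat')

/-- Pairs `(t, a)` with `t ∈ B` and `∅ ≠ a ⊊ t`; each unordered split of `t` occurs twice. -/
def splits (B : Finset (Finset (Fin n))) : Finset (Σ _ : Finset (Fin n), Finset (Fin n)) :=
  B.sigma fun t => (Icc 1 (#t - 1)).biUnion fun j => powersetCard j t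

theorem of_mem_splits {p : Σ _ : Finset (Fin n), Finset (Fin n)} (hp : p ∈ splits B) :
    p.1 ∈ B ∧ p.2.Nonempty ∧ p.2 ⊂ p.1 := by
  obtain ⟨ht, hp⟩ := mem_sigma.1 hp
  obtain ⟨j, hj, hjp⟩ := mem_biUnion.1 hp
  obtain ⟨hsub, rfl⟩ := mem_powersetCard.1 hjp
  obtain ⟨hj1, hj2⟩ := mem_Icc.1 hj
  exact ⟨ht, card_pos.1 hj1, ssubset_of_subset_of_ne hsub fun h => by rw [h] at hj1 hj2; omega⟩

theorem sum_splits {M : Type*} [AddCommMonoid M] (g : Finset (Fin n) → ℕ → M) :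
    ∑ p ∈ splits B, g p.1 #p.2 = ∑ t ∈ B, ∑ j ∈ Icc 1 (#t - 1), (#t).choose j • g t j := by
  rw [splits, sum_sigma]
  refine sum_congr rfl fun t _ => ?_
  rw [sum_biUnion ((pairwise_disjoint_powersetCard t).set_pairwise _)]
  refine sum_congr rfl fun j _ => ?_
  rw [sum_congr rfl fun a ha => by rw [(mem_powersetCard.1 ha).2]]
  simp only [sum_const, card_powersetCard]

theorem card_splits_splitBlock_eq_le_two (hB : IsPartition B)
    (p : Σ _ : Finset (Fin n), Finset (Fin n)) :
    #{q ∈ splits B | splitBlock B q.1 q.2 = splitBlock B p.1 p.2} ≤ 2 := by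
  calc #{q ∈ splits B | splitBlock B q.1 q.2 = splitBlock B p.1 p.2}
      ≤ #({⟨p.1, p.2⟩, ⟨p.1, p.1 \ p.2⟩} : Finset (Σ _ : Finset (Fin n), Finset (Fin n))) := by
        refine card_le_card fun q hq => ?_
        obtain ⟨hq, hqp⟩ := mem_filter.1 hq
        obtain ⟨ht', ha', hat'⟩ := of_mem_splits hq
        obtain ⟨h1, h2 | h2⟩ := eq_of_splitBlock_eq hB ht' ha' hat' hqp <;>
          simp [Sigma.ext_iff, h1, h2]
    _ ≤ 2 := card_le_two

theorem sum_splits_le_two_mul_sum_mergeOf (hB : IsPartition B) {s : ℕ} (hBs : #B = s)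
    {f : Finset (Finset (Fin n)) → ℝ} (hf : ∀ A ∈ rho n (s + 1), 0 ≤ f A) :
    ∑ p ∈ splits B, f (splitBlock B p.1 p.2) ≤
      2 * ∑ A ∈ (rho n (s + 1)).filter (fun A => MergeOf B A), f A := by
  refine sum_comp_le_mul_sum_of_card_fiber_le 2 (fun p hp => ?_)
    (fun p _ => card_splits_splitBlock_eq_le_two hB p) (fun A hA => hf A (mem_filter.1 hA).1)
  obtain ⟨ht, ha, hat⟩ := of_mem_splits hp
  refine mem_filter.2 ⟨mem_filter.2 ⟨mem_univ _, isPartition_splitBlock hB ht ha hat, ?_⟩,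
    mergeOf_splitBlock hB ht ha hat⟩
  rw [card_splitBlock hB ht ha hat, hBs]

end Split

open Nat in
theorem dpWeight_splitBlock {n : ℕ} {α : ℝ} {marg : Finset (Fin n) → ℝ}
    {B : Finset (Finset (Fin n))} {t a : Finset (Fin n)} (hB : IsPartition B) (ht : t ∈ B)
    (ha : a.Nonempty) (hat : a ⊂ t) (hmt : marg t ≠ 0) :
    dpWeight α n marg (splitBlock B t a) =
      α * ((#a - 1)! * (#(t \ a) - 1)! / (#t - 1)! * (marg a * marg (t \ a) / marg t)) *
        dpWeight α n marg B := by
  rw [dpWeight, dpWeight, card_splitBlock hB ht ha hat, splitBlock,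
    prod_insert (notMem_insert_sdiff_erase hB ht ha hat),
    prod_insert (sdiff_notMem_erase hB ht ha hat), ← mul_prod_erase B _ ht, pow_succ]
  have : ((#t - 1)! : ℝ) ≠ 0 := by positivity
  field_simp

theorem dpWeight_pos {n : ℕ} {α : ℝ} {marg : Finset (Fin n) → ℝ}
    {P : Finset (Finset (Fin n))} (hα : 0 < α) (hm : ∀ t ∈ P, 0 < marg t) :
    0 < dpWeight α n marg P := by
  have hasc : 0 < ascF α n := prod_pos fun i _ => by positivity
  exact mul_pos (by positivity) (prod_pos fun t ht => mul_pos (by positivity) (hm t ht))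

open Nat in
theorem choose_mul_factorial_div_factorial {b j : ℕ} (hj : 1 ≤ j) (hjb : j < b) :
    (b.choose j : ℝ) * ((j - 1)! * (b - j - 1)! / (b - 1)!) = b / (j * (b - j)) := by
  obtain ⟨k, rfl⟩ : ∃ k, j = k + 1 := ⟨j - 1, by omega⟩
  obtain ⟨l, rfl⟩ : ∃ l, b = k + 1 + (l + 1) := ⟨b - (k + 1) - 1, by omega⟩
  rw [Nat.cast_choose ℝ (by omega), show k + 1 + (l + 1) - (k + 1) = l + 1 by omega,
    show k + 1 + (l + 1) = k + l + 1 + 1 by omega]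
  simp only [add_tsub_cancel_right, factorial_succ]
  push_cast
  rw [show (k : ℝ) + l + 1 + 1 - (k + 1) = l + 1 by ring]
  field_simp

theorem Real.rpow_three_halves {x : ℝ} (hx : 0 ≤ x) : x ^ ((3 : ℝ) / 2) = x * √x := by
  rw [show (3 : ℝ) / 2 = 1 + 1 / 2 by norm_num, Real.rpow_add' hx (by norm_num), Real.rpow_one,
    Real.sqrt_eq_rpow]

theorem div_mul_sub_nonneg {b j : ℕ} (hjb : j ≤ b) : 0 ≤ (b : ℝ) / (j * (b - j)) := by
  have : (0 : ℝ) ≤ b - j := sub_nonneg.2 (mod_cast hjb)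
  positivity

open Nat in
theorem choose_mul_factorial_div_factorial_mul_sqrt {b j : ℕ} (hj : j ∈ Icc 1 (b - 1)) :
    (b.choose j : ℝ) * ((j - 1)! * (b - j - 1)! / (b - 1)!) * √((b : ℝ) / (j * (b - j))) =
      ((b : ℝ) / (j * (b - j))) ^ ((3 : ℝ) / 2) := by
  obtain ⟨hj1, hjb⟩ := mem_Icc.1 hj
  rw [choose_mul_factorial_div_factorial hj1 (by omega),
    Real.rpow_three_halves (div_mul_sub_nonneg (by omega))]

theorem two_le_sum_rpow_three_halves {b : ℕ} (hb : 2 ≤ b) :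
    2 ≤ ∑ j ∈ Icc 1 (b - 1), ((b : ℝ) / (j * (b - j))) ^ ((3 : ℝ) / 2) := by
  have hb' : (2 : ℝ) ≤ b := by exact_mod_cast hb
  have hend : ∀ j ∈ ({1, b - 1} : Finset ℕ),
      (b : ℝ) / (b - 1) ≤ ((b : ℝ) / (j * (b - j))) ^ ((3 : ℝ) / 2) := by
    intro j hj
    have hbase : (j : ℝ) * (b - j) = b - 1 := by
      rcases mem_insert.1 hj with rfl | hj
      · push_cast; ring
      · rw [mem_singleton.1 hj, Nat.cast_sub (by omega)]; push_cast; ring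
    rw [hbase]
    exact Real.self_le_rpow_of_one_le ((one_le_div (by linarith)).2 (by linarith)) (by norm_num)
  rcases hb.eq_or_lt with rfl | hb3
  · simpa [show (2 : ℝ) - 1 = 1 by norm_num] using hend 1 (by simp)
  have hsub : ({1, b - 1} : Finset ℕ) ⊆ Icc 1 (b - 1) := by
    intro j hj
    rcases mem_insert.1 hj with rfl | hj
    · exact mem_Icc.2 ⟨le_rfl, by omega⟩
    · exact mem_Icc.2 ⟨by rw [mem_singleton.1 hj]; omega, by rw [mem_singleton.1 hj]⟩
  have hone : 1 ≤ (b : ℝ) / (b - 1) := (one_le_div (by linarith)).2 (by linarith)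
  calc (2 : ℝ) ≤ ∑ j ∈ {1, b - 1}, ((b : ℝ) / (j * (b - j))) ^ ((3 : ℝ) / 2) := by
        rw [sum_pair (by omega)]
        linarith [hend 1 (by simp), hend (b - 1) (by simp)]
    _ ≤ _ := sum_le_sum_of_subset_of_nonneg hsub fun j hj _ =>
        Real.rpow_nonneg (div_mul_sub_nonneg (by grind)) _

theorem two_mul_card_filter_le_sum_rpow_three_halves {ι : Type*} (B : Finset (Finset ι)) :
    2 * (#{t ∈ B | 2 ≤ #t} : ℝ) ≤
      ∑ t ∈ B, ∑ j ∈ Icc 1 (#t - 1), ((#t : ℝ) / (j * (#t - j))) ^ ((3 : ℝ) / 2) :=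
  calc 2 * (#{t ∈ B | 2 ≤ #t} : ℝ) = ∑ t ∈ B with 2 ≤ #t, 2 := by
        rw [sum_const, nsmul_eq_mul, mul_comm]
    _ ≤ ∑ t ∈ B with 2 ≤ #t, ∑ j ∈ Icc 1 (#t - 1), ((#t : ℝ) / (j * (#t - j))) ^ ((3 : ℝ) / 2) :=
        sum_le_sum fun t ht => two_le_sum_rpow_three_halves (mem_filter.1 ht).2
    _ ≤ _ := sum_le_sum_of_subset_of_nonneg (filter_subset _ _) fun t _ _ =>
        sum_nonneg fun j hj => Real.rpow_nonneg (div_mul_sub_nonneg (by grind)) _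

open Nat in
theorem le_sum_dpWeight_mergeOf_div {n s : ℕ} {α K : ℝ} {marg : Finset (Fin n) → ℝ}
    {B : Finset (Finset (Fin n))} (hα : 0 < α) (hm : ∀ t : Finset (Fin n), t.Nonempty → 0 < marg t)
    (hB : IsPartition B) (hBs : #B = s)
    (hratio : ∀ t ∈ B, ∀ a ⊆ t, a.Nonempty → a ≠ t →
      K * √((#t : ℝ) / (#a * (#t - #a))) ≤ marg a * marg (t \ a) / marg t) :
    α * K / 2 * ∑ t ∈ B, ∑ j ∈ Icc 1 (#t - 1),
        ((#t).choose j : ℝ) * ((j - 1)! * (#t - j - 1)! / (#t - 1)!) *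
          √((#t : ℝ) / (j * (#t - j))) ≤
      ∑ A ∈ (rho n (s + 1)).filter (fun A => MergeOf B A),
        dpWeight α n marg A / dpWeight α n marg B := by
  have hBpos : 0 < dpWeight α n marg B :=
    dpWeight_pos hα fun t ht => hm t (hB.nonempty_of_mem ht)
  have hsplit : ∀ p ∈ splits B,
      α * K * ((#p.2 - 1)! * (#p.1 - #p.2 - 1)! / (#p.1 - 1)! *
        √((#p.1 : ℝ) / (#p.2 * (#p.1 - #p.2)))) ≤
      dpWeight α n marg (splitBlock B p.1 p.2) / dpWeight α n marg B := by
    rintro ⟨t, a⟩ hp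
    obtain ⟨ht, ha, hat⟩ := of_mem_splits hp
    rw [dpWeight_splitBlock hB ht ha hat (hm t (ha.mono hat.subset)).ne',
      mul_div_cancel_right₀ _ hBpos.ne', card_sdiff_of_subset hat.subset]
    refine Eq.trans_le (by ring) (mul_le_mul_of_nonneg_left (mul_le_mul_of_nonneg_left
      (hratio t ht a hat.subset ha hat.ne) (by positivity)) hα.le)
  calc _ = 1 / 2 * ∑ p ∈ splits B, α * K * ((#p.2 - 1)! * (#p.1 - #p.2 - 1)! / (#p.1 - 1)! *
          √((#p.1 : ℝ) / (#p.2 * (#p.1 - #p.2)))) := by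
        rw [sum_splits (fun t j => α * K * ((j - 1)! * (#t - j - 1)! / (#t - 1)! *
          √((#t : ℝ) / (j * (#t - j)))))]
        simp only [mul_sum, nsmul_eq_mul]
        exact sum_congr rfl fun t _ => sum_congr rfl fun j _ => by ring
    _ ≤ 1 / 2 * ∑ p ∈ splits B, dpWeight α n marg (splitBlock B p.1 p.2) / dpWeight α n marg B :=
        by gcongr with p hp; exact hsplit p hp
    _ ≤ 1 / 2 * (2 * ∑ A ∈ (rho n (s + 1)).filter (fun A => MergeOf B A),
          dpWeight α n marg A / dpWeight α n marg B) := by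
        gcongr
        refine sum_splits_le_two_mul_sum_mergeOf hB hBs fun A hA => div_nonneg ?_ hBpos.le
        exact (dpWeight_pos hα fun t ht =>
          hm t ((mem_filter.1 hA).2.1.nonempty_of_mem ht)).le
    _ = _ := by ring

theorem stmt_18_general (n s : ℕ)
    (α c₁ L : ℝ) (hα : 0 < α) (hc₁ : 0 < c₁) (hL : 0 < L)
    (marg : Finset (Fin n) → ℝ) (hmpos : ∀ t : Finset (Fin n), t.Nonempty → 0 < marg t)
    (B : Finset (Finset (Fin n))) (hB : B ∈ rho n s)
    (hratio : ∀ t ∈ B, ∀ a ⊆ t, a.Nonempty → a ≠ t →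
      c₁ * Real.sqrt (2 * Real.pi) / L *
          Real.sqrt ((t.card : ℝ) / ((a.card : ℝ) * ((t.card : ℝ) - (a.card : ℝ)))) ≤
        marg a * marg (t \ a) / marg t) :
    (α * c₁ * Real.sqrt (2 * Real.pi) / (2 * L) *
        ∑ t ∈ B, ∑ j ∈ Finset.Icc 1 (t.card - 1),
          (t.card.choose j : ℝ) *
            ((Nat.factorial (j - 1) : ℝ) * (Nat.factorial (t.card - j - 1) : ℝ) /
              (Nat.factorial (t.card - 1) : ℝ)) *
            Real.sqrt ((t.card : ℝ) / ((j : ℝ) * ((t.card : ℝ) - (j : ℝ)))) ≤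
      ∑ A ∈ (rho n (s + 1)).filter (fun A => MergeOf B A),
        dpWeight α n marg A / dpWeight α n marg B) ∧
    (α * c₁ * Real.sqrt (2 * Real.pi) / (2 * L) *
        ∑ t ∈ B, ∑ j ∈ Finset.Icc 1 (t.card - 1),
          (t.card.choose j : ℝ) *
            ((Nat.factorial (j - 1) : ℝ) * (Nat.factorial (t.card - j - 1) : ℝ) /
              (Nat.factorial (t.card - 1) : ℝ)) *
            Real.sqrt ((t.card : ℝ) / ((j : ℝ) * ((t.card : ℝ) - (j : ℝ)))) =
      α * c₁ * Real.sqrt (2 * Real.pi) / (2 * L) *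
        ∑ t ∈ B, ∑ j ∈ Finset.Icc 1 (t.card - 1),
          ((t.card : ℝ) / ((j : ℝ) * ((t.card : ℝ) - (j : ℝ)))) ^ ((3 : ℝ) / 2)) ∧
    (α * c₁ * Real.sqrt (2 * Real.pi) / L *
        ((B.filter (fun t => 2 ≤ t.card)).card : ℝ) ≤
      α * c₁ * Real.sqrt (2 * Real.pi) / (2 * L) *
        ∑ t ∈ B, ∑ j ∈ Finset.Icc 1 (t.card - 1),
          ((t.card : ℝ) / ((j : ℝ) * ((t.card : ℝ) - (j : ℝ)))) ^ ((3 : ℝ) / 2)) := by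
  obtain ⟨-, hBpart, hBs⟩ := mem_filter.1 hB
  refine ⟨?_, ?_, ?_⟩
  · rw [show α * c₁ * √(2 * Real.pi) / (2 * L) = α * (c₁ * √(2 * Real.pi) / L) / 2 by ring]
    exact le_sum_dpWeight_mergeOf_div hα hmpos hBpart hBs hratio
  · exact congrArg _ (sum_congr rfl fun t _ =>
      sum_congr rfl fun j => choose_mul_factorial_div_factorial_mul_sqrt)
  · rw [show α * c₁ * √(2 * Real.pi) / L * #{t ∈ B | 2 ≤ #t} =
      α * c₁ * √(2 * Real.pi) / (2 * L) * (2 * #{t ∈ B | 2 ≤ #t}) by ring]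
    gcongr
    exact two_mul_card_filter_le_sum_rpow_three_halves B

theorem stmt_18 (n s : ℕ) (hs : 1 ≤ s) (hn : s + 1 ≤ n)
    (α c₁ L : ℝ) (hα : 0 < α) (hc₁ : 0 < c₁) (hL : 0 < L)
    (marg : Finset (Fin n) → ℝ) (hmpos : ∀ t : Finset (Fin n), t.Nonempty → 0 < marg t)
    (B : Finset (Finset (Fin n))) (hB : B ∈ rho n s)
    (hratio : ∀ t ∈ B, ∀ a ⊆ t, a.Nonempty → a ≠ t →
      c₁ * Real.sqrt (2 * Real.pi) / L *
          Real.sqrt ((t.card : ℝ) / ((a.card : ℝ) * ((t.card : ℝ) - (a.card : ℝ)))) ≤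
        marg a * marg (t \ a) / marg t) :
    (α * c₁ * Real.sqrt (2 * Real.pi) / (2 * L) *
        ∑ t ∈ B, ∑ j ∈ Finset.Icc 1 (t.card - 1),
          (t.card.choose j : ℝ) *
            ((Nat.factorial (j - 1) : ℝ) * (Nat.factorial (t.card - j - 1) : ℝ) /
              (Nat.factorial (t.card - 1) : ℝ)) *
            Real.sqrt ((t.card : ℝ) / ((j : ℝ) * ((t.card : ℝ) - (j : ℝ)))) ≤
      ∑ A ∈ (rho n (s + 1)).filter (fun A => MergeOf B A),
        dpWeight α n marg A / dpWeight α n marg B) ∧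
    (α * c₁ * Real.sqrt (2 * Real.pi) / (2 * L) *
        ∑ t ∈ B, ∑ j ∈ Finset.Icc 1 (t.card - 1),
          (t.card.choose j : ℝ) *
            ((Nat.factorial (j - 1) : ℝ) * (Nat.factorial (t.card - j - 1) : ℝ) /
              (Nat.factorial (t.card - 1) : ℝ)) *
            Real.sqrt ((t.card : ℝ) / ((j : ℝ) * ((t.card : ℝ) - (j : ℝ)))) =
      α * c₁ * Real.sqrt (2 * Real.pi) / (2 * L) *
        ∑ t ∈ B, ∑ j ∈ Finset.Icc 1 (t.card - 1),
          ((t.card : ℝ) / ((j : ℝ) * ((t.card : ℝ) - (j : ℝ)))) ^ ((3 : ℝ) / 2)) ∧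
    (α * c₁ * Real.sqrt (2 * Real.pi) / L *
        ((B.filter (fun t => 2 ≤ t.card)).card : ℝ) ≤
      α * c₁ * Real.sqrt (2 * Real.pi) / (2 * L) *
        ∑ t ∈ B, ∑ j ∈ Finset.Icc 1 (t.card - 1),
          ((t.card : ℝ) / ((j : ℝ) * ((t.card : ℝ) - (j : ℝ)))) ^ ((3 : ℝ) / 2)) :=
  stmt_18_general n s α c₁ L hα hc₁ hL marg hmpos B hB hratio
end
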